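/- Let 𝔤 be the 4-dimensional real Lie algebra with basis e₁,e₂,e₃,e₄ and only nonzero bracket [e₁,e₂] = e₁ (the Lie algebra 𝔤_{2.1} ⊕ 2𝔤₁). A 4×4 real matrix R (viewed as a linear endomorphism of 𝔤 in this basis) can be written as R = η·Id + D for some real number η and some derivation D of 𝔤 if and only if R₂₁ = R₃₁ = R₄₁ = R₁₃ = R₁₄ = R₂₃ = R₂₄ = 0. In this case necessarily η = R₂₂. -/

import Mathlib

/-! `R = η • 1 + D` with `D` a derivation iff `R - η • 1` is a derivation. Evaluating the
derivation rule on pairs of basis vectors shows that the derivations are exactly the matrices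
with the seven listed entries zero and `D₂₂ = 0`: the rule on `[e₁, e₂] = e₁` reads
`D e₁ = [D e₁, e₂] + [e₁, D e₂] = (D₁₁ + D₂₂) e₁`. Subtracting `η • 1` changes only the
diagonal, so the off-diagonal conditions pass to `R` and `D₂₂ = 0` pins `η = R₂₂`. -/

open Matrix

/-- The Lie bracket of the Lie algebra, in coordinates. -/
def br (x y : Fin 4 → ℝ) : Fin 4 → ℝ :=
  ![(x 0 * y 1 - x 1 * y 0), (0:ℝ), (0:ℝ), (0:ℝ)]

/-- `D` (acting via `mulVec`) is a derivation of the bracket. -/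
def IsDer (D : Matrix (Fin 4) (Fin 4) ℝ) : Prop :=
  ∀ x y : Fin 4 → ℝ, D.mulVec (br x y) = br (D.mulVec x) y + br x (D.mulVec y)

theorem isDer_iff (D : Matrix (Fin 4) (Fin 4) ℝ) :
    IsDer D ↔ D 1 0 = 0 ∧ D 2 0 = 0 ∧ D 3 0 = 0 ∧ D 0 2 = 0 ∧ D 0 3 = 0 ∧ D 1 2 = 0 ∧
      D 1 3 = 0 ∧ D 1 1 = 0 := by
  constructor
  · intro hD
    have he₁₂ := hD (Pi.single 0 1) (Pi.single 1 1)
    have h₁₁ := congrFun he₁₂ 0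
    have h₁₀ := congrFun he₁₂ 1
    have h₂₀ := congrFun he₁₂ 2
    have h₃₀ := congrFun he₁₂ 3
    have h₀₂ := congrFun (hD (Pi.single 1 1) (Pi.single 2 1)) 0
    have h₀₃ := congrFun (hD (Pi.single 1 1) (Pi.single 3 1)) 0
    have h₁₂ := congrFun (hD (Pi.single 0 1) (Pi.single 2 1)) 0
    have h₁₃ := congrFun (hD (Pi.single 0 1) (Pi.single 3 1)) 0
    simp [mulVec, dotProduct, Fin.sum_univ_four, br] at h₁₁ h₁₀ h₂₀ h₃₀ h₀₂ h₀₃ h₁₂ h₁₃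
    exact ⟨h₁₀, h₂₀, h₃₀, h₀₂, h₀₃, h₁₂.symm, h₁₃.symm, h₁₁⟩
  · rintro ⟨h₁₀, h₂₀, h₃₀, h₀₂, h₀₃, h₁₂, h₁₃, h₁₁⟩ x y
    funext i
    fin_cases i
    · simp [mulVec, dotProduct, br, Fin.sum_univ_four, h₁₀, h₀₂, h₀₃, h₁₂, h₁₃, h₁₁]
      ring
    all_goals simp [mulVec, dotProduct, br, Fin.sum_univ_four, h₁₀, h₂₀, h₃₀]

theorem isDer_sub_smul_one_iff (R : Matrix (Fin 4) (Fin 4) ℝ) (η : ℝ) :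
    IsDer (R - η • 1) ↔
      (R 1 0 = 0 ∧ R 2 0 = 0 ∧ R 3 0 = 0 ∧ R 0 2 = 0 ∧ R 0 3 = 0 ∧ R 1 2 = 0 ∧ R 1 3 = 0) ∧
        η = R 1 1 := by
  simp [isDer_iff, one_apply, sub_eq_zero, @eq_comm _ η, and_assoc]

theorem stmt_0 (R : Matrix (Fin 4) (Fin 4) ℝ) :
    ((∃ (η : ℝ) (D : Matrix (Fin 4) (Fin 4) ℝ), IsDer D ∧
        R = η • (1 : Matrix (Fin 4) (Fin 4) ℝ) + D) ↔
      (R 1 0 = 0 ∧ R 2 0 = 0 ∧ R 3 0 = 0 ∧ R 0 2 = 0 ∧ R 0 3 = 0 ∧ R 1 2 = 0 ∧ R 1 3 = 0)) ∧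
    (∀ (η : ℝ) (D : Matrix (Fin 4) (Fin 4) ℝ), IsDer D →
      R = η • (1 : Matrix (Fin 4) (Fin 4) ℝ) + D → η = R 1 1) := by
  have hsub : ∀ (η : ℝ) (D : Matrix (Fin 4) (Fin 4) ℝ), R = η • 1 + D → D = R - η • 1 := by
    rintro η D rfl
    abel
  refine ⟨⟨?_, fun h ↦ ⟨R 1 1, R - R 1 1 • 1, (isDer_sub_smul_one_iff R _).2 ⟨h, rfl⟩, by abel⟩⟩, ?_⟩
  · rintro ⟨η, D, hDer, hR⟩
    rw [hsub η D hR] at hDer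
    exact ((isDer_sub_smul_one_iff R η).1 hDer).1
  · intro η D hDer hR
    rw [hsub η D hR] at hDer
    exact ((isDer_sub_smul_one_iff R η).1 hDer).2
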